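/- For every real c > 0 and every real a: ∫_0^1 (1 + r²) · (1 − r)^{−4} · ( ((1+r)/(1−r))·c + i·a )^{−7} dr = (25c² + 6iac − a²) / (240·c³·(c + ia)⁶). -/

import Mathlib

/-!
Write `z = c + ia` and `q = c - ia`. Since `((1+r)/(1-r))·c + ia = (z + rq)/(1-r)`, the integrand
is `(1+r²)(1-r)³/(z+rq)⁷`. The Möbius substitution `u = (1-r)/(z+rq)`, with
`du/dr = -(z+q)/(z+rq)²`, turns it into a polynomial in `u`, so it has the primitive
`(-15u⁴ + 12(z-q)u⁵ - 5(z²+q²)u⁶)/(30(z+q)³)`. This vanishes at `r = 1` (`u = 0`), and at `r = 0`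
(`u = 1/z`) it gives the closed form, since `z + q = 2c` and `z + rq` has real part `(1+r)c > 0`.
-/

open MeasureTheory Set Complex

noncomputable def septicPrimitive (z q w : ℂ) : ℂ :=
  let u := (1 - w) / (z + w * q)
  (-15 * u ^ 4 + 12 * (z - q) * u ^ 5 - 5 * (z ^ 2 + q ^ 2) * u ^ 6) / (30 * (z + q) ^ 3)

lemma hasDerivAt_one_sub_div_add_mul {z q w : ℂ} (hw : z + w * q ≠ 0) :
    HasDerivAt (fun w => (1 - w) / (z + w * q)) (-(z + q) / (z + w * q) ^ 2) w :=
  (((hasDerivAt_id' w).const_sub 1).div (((hasDerivAt_id' w).mul_const q).const_add z) hw).congr_deriv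
    (by ring)

lemma hasDerivAt_septicPrimitive {z q w : ℂ} (hzq : z + q ≠ 0) (hw : z + w * q ≠ 0) :
    HasDerivAt (septicPrimitive z q) ((1 + w ^ 2) * (1 - w) ^ 3 / (z + w * q) ^ 7) w := by
  have hu := hasDerivAt_one_sub_div_add_mul hw
  have hF := ((((hu.pow 4).const_mul (-15)).add ((hu.pow 5).const_mul (12 * (z - q)))).sub
    ((hu.pow 6).const_mul (5 * (z ^ 2 + q ^ 2)))).div_const (30 * (z + q) ^ 3)
  refine HasDerivAt.congr_deriv (f := septicPrimitive z q) hF ?_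
  simp only [Nat.cast_ofNat, Nat.reduceSub]
  field_simp
  ring

lemma septicPrimitive_one (z q : ℂ) : septicPrimitive z q 1 = 0 := by
  simp [septicPrimitive]

lemma septicPrimitive_zero (z q : ℂ) :
    septicPrimitive z q 0 = -(8 * z ^ 2 + 12 * z * q + 5 * q ^ 2) / (30 * (z + q) ^ 3 * z ^ 6) := by
  rw [mul_comm _ (z ^ 6), ← div_div, septicPrimitive]
  congr 1
  rcases eq_or_ne z 0 with rfl | hz
  · simp
  · simp only [sub_zero, zero_mul, add_zero]
    field_simp
    ring

theorem integral_one_add_sq_mul_one_sub_pow_div_pow_seven {z q : ℂ}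
    (h : ∀ r ∈ Icc (0 : ℝ) 1, z + r * q ≠ 0) :
    ∫ r in (0 : ℝ)..1, (1 + (r : ℂ) ^ 2) * (1 - r) ^ 3 / (z + r * q) ^ 7 =
      (8 * z ^ 2 + 12 * z * q + 5 * q ^ 2) / (30 * (z + q) ^ 3 * z ^ 6) := by
  have hzq : z + q ≠ 0 := by simpa using h 1 (by simp)
  have hderiv : ∀ r ∈ uIcc (0 : ℝ) 1, HasDerivAt (fun r : ℝ => septicPrimitive z q r)
      ((1 + (r : ℂ) ^ 2) * (1 - r) ^ 3 / (z + r * q) ^ 7) r := by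
    rw [uIcc_of_le zero_le_one]
    exact fun r hr => (hasDerivAt_septicPrimitive hzq (h r hr)).comp_ofReal
  have hint : IntervalIntegrable (fun r : ℝ => (1 + (r : ℂ) ^ 2) * (1 - r) ^ 3 / (z + r * q) ^ 7)
      volume 0 1 := by
    refine ContinuousOn.intervalIntegrable (ContinuousOn.div (by fun_prop) (by fun_prop) ?_)
    rw [uIcc_of_le zero_le_one]
    exact fun r hr => pow_ne_zero _ (h r hr)
  rw [intervalIntegral.integral_eq_sub_of_hasDerivAt hderiv hint]
  push_cast
  rw [septicPrimitive_one, septicPrimitive_zero]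
  ring

theorem integrand_eq_div_pow_seven (c r : ℝ) (w : ℂ) :
    (((1 + r ^ 2) / (1 - r) ^ 4 : ℝ) : ℂ) * (((((1 + r) / (1 - r) * c : ℝ) : ℂ) + w) ^ 7)⁻¹ =
      (1 + (r : ℂ) ^ 2) * (1 - r) ^ 3 / ((c + w) + r * (c - w)) ^ 7 := by
  rcases eq_or_ne r 1 with rfl | hr
  · simp -- at `r = 1` both sides are `0`, the left one through `x / 0 = 0`
  have hr' : (1 : ℂ) - r ≠ 0 := by
    rw [sub_ne_zero]; exact_mod_cast hr.symm
  have : (((1 + r) / (1 - r) * c : ℝ) : ℂ) + w = ((c + w) + r * (c - w)) / (1 - r) := by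
    push_cast
    field_simp
    ring
  rw [this, div_pow, inv_div]
  push_cast
  field_simp

theorem statement_16 (c a : ℝ) (hc : 0 < c) :
    (∫ r in (0 : ℝ)..1,
        (((1 + r ^ 2) / (1 - r) ^ 4 : ℝ) : ℂ) *
          (((((1 + r) / (1 - r) * c : ℝ) : ℂ) + Complex.I * (a : ℂ)) ^ 7)⁻¹) =
      (25 * (c : ℂ) ^ 2 + 6 * Complex.I * (a : ℂ) * (c : ℂ) - (a : ℂ) ^ 2) /
        (240 * (c : ℂ) ^ 3 * ((c : ℂ) + Complex.I * (a : ℂ)) ^ 6) := by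
  have hne : ∀ r ∈ Icc (0 : ℝ) 1, (c + I * a) + r * (c - I * a) ≠ 0 := by
    intro r hr h
    have hre : ((c + I * a) + r * (c - I * a) : ℂ).re = (1 + r) * c := by simp [add_mul]
    rw [h, zero_re] at hre
    nlinarith [hr.1]
  simp_rw [integrand_eq_div_pow_seven, integral_one_add_sq_mul_one_sub_pow_div_pow_seven hne]
  congr 1
  · linear_combination (a : ℂ) ^ 2 * I_sq
  · ring
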